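/- Let (R,m,k) be an Artinian local ring possessing a canonical module ω, and suppose that 2·dim_k socle(R) > ℓ(R). If Ext_R^i(ω,R) = 0 for 1 ≤ i ≤ μ(ω), then R is Gorenstein. -/

import Mathlib

open IsLocalRing

universe u v

/-- `d`, `ε` form a minimal free resolution of the `R`-module `M`,
with `i`-th Betti number `b i`. -/
def IsMinFreeRes (R : Type u) [CommRing R] [IsLocalRing R]
    (M : Type v) [AddCommGroup M] [Module R M] (b : ℕ → ℕ)
    (d : ∀ i : ℕ, ((Fin (b (i+1)) → R) →ₗ[R] (Fin (b i) → R)))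
    (ε : (Fin (b 0) → R) →ₗ[R] M) : Prop :=
  Function.Surjective ε ∧ Function.Exact (d 0) ε ∧
  (∀ i, Function.Exact (d (i+1)) (d i)) ∧
  (∀ i, LinearMap.range (d i) ≤ (maximalIdeal R) • (⊤ : Submodule R (Fin (b i) → R)))

/-- `b` is the sequence of Betti numbers of the `R`-module `M`. -/
def HasBettiSeq (R : Type u) [CommRing R] [IsLocalRing R]
    (M : Type v) [AddCommGroup M] [Module R M] (b : ℕ → ℕ) : Prop :=
  ∃ d ε, IsMinFreeRes R M b d ε

/-- The depth of a module: the supremum of lengths of `M`-regular sequences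
contained in the maximal ideal. -/
noncomputable def mdepth (R : Type u) [CommRing R] [IsLocalRing R]
    (M : Type v) [AddCommGroup M] [Module R M] : ℕ∞ :=
  sSup {n : ℕ∞ | ∃ rs : List R, (rs.length : ℕ∞) = n ∧ (∀ r ∈ rs, r ∈ maximalIdeal R) ∧
    RingTheory.Sequence.IsRegular M rs}

/-- The (Krull) dimension of a module. -/
noncomputable def mdim (R : Type u) [CommRing R]
    (M : Type v) [AddCommGroup M] [Module R M] : WithBot ℕ∞ :=
  ringKrullDim (R ⧸ Module.annihilator R M)

/-- The length of a module. -/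
noncomputable def mlength (R : Type u) [CommRing R]
    (M : Type v) [AddCommGroup M] [Module R M] : ℕ∞ :=
  sSup {n : ℕ∞ | ∃ c : RelSeries (α := Submodule R M) {p : Submodule R M × Submodule R M | p.1 < p.2}, (c.length : ℕ∞) = n}

/-- The minimal number of generators of a module. -/
noncomputable def mu (R : Type u) [CommRing R]
    (M : Type v) [AddCommGroup M] [Module R M] : ℕ :=
  sInf {n | ∃ s : Fin n → M, Submodule.span R (Set.range s) = ⊤}

/-- A Cohen--Macaulay local ring: Noetherian local with `depth = dim`. -/
def IsCMLocalRing (R : Type u) [CommRing R] [IsLocalRing R] : Prop :=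
  IsNoetherianRing R ∧ (mdepth R R : WithBot ℕ∞) = ringKrullDim R

/-- A Cohen--Macaulay module of dimension `d`. -/
def IsCMModOfDim (R : Type u) [CommRing R] [IsLocalRing R]
    (M : Type v) [AddCommGroup M] [Module R M] (d : ℕ) : Prop :=
  Module.Finite R M ∧ mdepth R M = (d : ℕ∞) ∧ mdim R M = (d : WithBot ℕ∞)

/-- A maximal Cohen--Macaulay module. -/
def IsMCMMod (R : Type u) [CommRing R] [IsLocalRing R]
    (M : Type v) [AddCommGroup M] [Module R M] : Prop :=
  Module.Finite R M ∧ (mdepth R M : WithBot ℕ∞) = ringKrullDim R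

/-- `M` has finite injective dimension over `R`. -/
def HasFiniteInjDim (R : Type u) [CommRing R]
    (M : Type v) [AddCommGroup M] [Module R M] : Prop :=
  ∃ (n : ℕ) (I : ℕ → ModuleCat.{v} R) (d : ∀ i, I i →ₗ[R] I (i+1)) (ε : M →ₗ[R] I 0),
    Function.Injective ε ∧ (∀ i, Module.Injective R (I i)) ∧
    Function.Exact ε (d 0) ∧ (∀ i, Function.Exact (d i) (d (i+1))) ∧
    (∀ i, n < i → Subsingleton (I i))

/-- `ω` is a canonical module of the local ring `R`: a maximal Cohen--Macaulay module
of finite injective dimension such that the natural map `R → Hom_R(ω, ω)` is an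
isomorphism. -/
def IsCanonicalModule (R : Type u) [CommRing R] [IsLocalRing R]
    (ω : Type v) [AddCommGroup ω] [Module R ω] : Prop :=
  IsMCMMod R ω ∧ HasFiniteInjDim R ω ∧
    Function.Bijective (algebraMap R (Module.End R ω))

/-- A Gorenstein local ring: Noetherian, of finite injective dimension over itself. -/
def IsGorensteinLocalRing (R : Type u) [CommRing R] [IsLocalRing R] : Prop :=
  IsNoetherianRing R ∧ HasFiniteInjDim R R

/-- A sequence of natural numbers grows exponentially. -/
def ExpGrowth (b : ℕ → ℕ) : Prop :=
  ∃ α β : ℝ, 1 < α ∧ α < β ∧ ∀ᶠ n in Filter.atTop, α ^ n < (b n : ℝ) ∧ (b n : ℝ) < β ^ n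

/-- A sequence of natural numbers is eventually strictly increasing. -/
def EvStrictIncr (b : ℕ → ℕ) : Prop := ∃ N, ∀ n, N ≤ n → b n < b (n+1)

/-- `Ext^{i+1}_R(M, N) = 0`, computed via minimal free resolutions of `M`. -/
def ExtVanishesSucc (R : Type u) [CommRing R] [IsLocalRing R]
    (M : Type u) [AddCommGroup M] [Module R M]
    (N : Type u) [AddCommGroup N] [Module R N] (i : ℕ) : Prop :=
  ∀ (b : ℕ → ℕ) (d : ∀ i : ℕ, ((Fin (b (i+1)) → R) →ₗ[R] (Fin (b i) → R)))
    (ε : (Fin (b 0) → R) →ₗ[R] M), IsMinFreeRes R M b d ε →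
    ∀ g : (Fin (b (i+1)) → R) →ₗ[R] N, g.comp (d (i+1)) = 0 →
      ∃ h : (Fin (b i) → R) →ₗ[R] N, g = h.comp (d i)

/-- `Tor_{i+1}^R(M, N) = 0`, computed via minimal free resolutions of `M`. -/
def TorVanishesSucc (R : Type u) [CommRing R] [IsLocalRing R]
    (M : Type u) [AddCommGroup M] [Module R M]
    (N : Type u) [AddCommGroup N] [Module R N] (i : ℕ) : Prop :=
  ∀ (b : ℕ → ℕ) (d : ∀ i : ℕ, ((Fin (b (i+1)) → R) →ₗ[R] (Fin (b i) → R)))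
    (ε : (Fin (b 0) → R) →ₗ[R] M), IsMinFreeRes R M b d ε →
    Function.Exact (LinearMap.rTensor N (d (i+1))) (LinearMap.rTensor N (d i))

/-! Let `F` be a minimal free resolution of `ω` with Betti numbers `b i`; all differentials
have entries in `𝔪`, so `Hom(d i, R)` kills `soc(R) • F_i^*`, and `Ext^{i+1}(ω, R) = 0` puts
`soc(R) • F_{i+1}^*` into its image. Counting lengths in `F_i^*` gives
`(b i + b (i+1)) • ℓ(soc R) ≤ b i • ℓ(R)`, so `2 ℓ(soc R) > ℓ(R)` makes the Betti numbers strictly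
decrease until they vanish, whence `b μ(ω) = 0`. A minimal resolution cannot end with an injective
differential, as `soc(R) • F_{i+1} ⊆ ker (d i)`; hence `b 1 = 0` and `ω ≅ R^{b 0}`, and
`End(ω) = R` forces `b 0 = 1`. So `R ≅ ω` has finite injective dimension. -/

universe w

section Numerics

theorem eq_zero_of_forall_succ_lt_or_eq_zero {b : ℕ → ℕ} {t : ℕ} (hb : b 0 ≤ t)
    (h : ∀ i < t, b (i + 1) < b i ∨ b (i + 1) = 0) : b t = 0 := by
  suffices ∀ j ≤ t, b j ≤ b 0 - j by have := this t le_rfl; omega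
  intro j hj
  induction j with
  | zero => simp
  | succ j ih => have := ih (by omega); rcases h j (by omega) with h' | h' <;> omega

theorem lt_or_eq_zero_of_add_mul_le {b₀ b₁ : ℕ} {S L : ℕ∞} (hSL : S ≤ L) (hLS : L < 2 * S)
    (h : (b₀ + b₁ : ℕ∞) * S ≤ b₀ * L) : b₁ < b₀ ∨ b₁ = 0 := by
  lift L to ℕ using hLS.ne_top
  lift S to ℕ using ne_top_of_le_ne_top (ENat.natCast_ne_top L) hSL
  norm_cast at hSL hLS h
  by_contra! hb
  obtain ⟨hb, hb₁⟩ := hb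
  have hL : L + 1 ≤ 2 * S := hLS
  nlinarith [Nat.mul_le_mul_left b₀ hL, Nat.mul_le_mul_right S hb, Nat.pos_of_ne_zero hb₁]

end Numerics

section Length

variable {R : Type u} [CommRing R] {M : Type v} [AddCommGroup M] [Module R M]

theorem mlength_eq_length : mlength R M = Module.length R M := by
  apply WithBot.coe_injective
  rw [Module.coe_length, Order.krullDim_eq_iSup_length, mlength, iSup]
  rfl

variable {N : Type w} [AddCommGroup N] [Module R N]

theorem Module.length_add_length_le_of_le_ker_of_le_range (f : M →ₗ[R] N)
    {K : Submodule R M} {K' : Submodule R N} (hK : K ≤ LinearMap.ker f)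
    (hK' : K' ≤ LinearMap.range f) :
    Module.length R K + Module.length R K' ≤ Module.length R M := by
  rw [Module.length_eq_add_of_exact (LinearMap.ker f).subtype f.rangeRestrict
    (Submodule.subtype_injective _) f.surjective_rangeRestrict
    (LinearMap.exact_iff.2 (by rw [LinearMap.ker_rangeRestrict, Submodule.range_subtype]))]
  exact add_le_add
    (Module.length_le_of_injective _ (Submodule.inclusion_injective hK))
    (Module.length_le_of_injective _ (Submodule.inclusion_injective hK'))

theorem LinearMap.range_eq_bot_of_fin_zero {n : ℕ} (f : (Fin n → R) →ₗ[R] N) (hn : n = 0) :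
    LinearMap.range f = ⊥ := by
  subst hn
  rw [LinearMap.range_eq_bot]
  exact Subsingleton.elim _ _

theorem Ideal.smul_top_eq_pi {ι : Type*} [Finite ι] (I : Ideal R) :
    I • (⊤ : Submodule R (ι → R)) = Submodule.pi Set.univ (fun _ => I) := by
  classical
  have := Fintype.ofFinite ι
  refine le_antisymm (Submodule.smul_le.2 fun r hr v _ i _ => I.mul_mem_right _ hr) fun v hv => ?_
  rw [pi_eq_sum_univ v]
  exact Submodule.sum_mem _ fun i _ => Submodule.smul_mem_smul (hv i trivial) trivial

theorem Ideal.length_smul_top_congr (I : Ideal R) (e : M ≃ₗ[R] N) :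
    Module.length R (I • ⊤ : Submodule R M) = Module.length R (I • ⊤ : Submodule R N) := by
  rw [(e.submoduleMap (I • ⊤)).length_eq, Submodule.map_smul'', Submodule.map_top,
    LinearEquiv.range]

theorem Ideal.length_smul_top_pi (I : Ideal R) (ι : Type*) [Finite ι] :
    Module.length R (I • ⊤ : Submodule R (ι → R)) = ENat.card ι * Module.length R I := by
  rw [Ideal.smul_top_eq_pi, ← Module.length_pi]
  exact LinearEquiv.length_eq
    { toFun v i := ⟨v.1 i, v.2 i trivial⟩
      map_add' _ _ := rfl
      map_smul' _ _ := rfl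
      invFun w := ⟨fun i => w i, fun i _ => (w i).2⟩
      left_inv _ := rfl
      right_inv _ := rfl }

theorem Ideal.length_smul_top_dual (I : Ideal R) (ι : Type*) [Finite ι] :
    Module.length R (I • ⊤ : Submodule R ((ι → R) →ₗ[R] R)) = ENat.card ι * Module.length R I := by
  rw [I.length_smul_top_congr (Module.piEquiv ι R R).symm, I.length_smul_top_pi]

theorem Module.length_dual_pi (ι : Type*) [Finite ι] :
    Module.length R ((ι → R) →ₗ[R] R) = ENat.card ι * Module.length R R := by
  rw [← (Module.piEquiv ι R R).length_eq, Module.length_pi]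

end Length

section Socle

variable {R : Type u} [CommRing R] [IsLocalRing R]
variable {M : Type v} [AddCommGroup M] [Module R M] {N : Type w} [AddCommGroup N] [Module R N]

variable (R) in
abbrev IsLocalRing.socle : Ideal R := (⊥ : Submodule R R).colon (maximalIdeal R)

theorem socle_smul_eq_zero {σ : R} (hσ : σ ∈ socle R) {y : M}
    (hy : y ∈ maximalIdeal R • (⊤ : Submodule R M)) : σ • y = 0 := by
  refine Submodule.smul_induction_on hy (fun r hr z _ => ?_) fun y y' hy hy' => ?_
  · have : σ * r = 0 := (Submodule.mem_bot R).1 (Submodule.mem_colon.1 hσ r hr)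
    rw [smul_smul, this, zero_smul]
  · rw [smul_add, hy, hy', add_zero]

theorem socle_smul_top_le_ker (f : M →ₗ[R] N)
    (hf : LinearMap.range f ≤ maximalIdeal R • ⊤) : socle R • ⊤ ≤ LinearMap.ker f :=
  Submodule.smul_le.2 fun σ hσ x _ => by
    rw [LinearMap.mem_ker, map_smul]
    exact socle_smul_eq_zero hσ (hf ⟨x, rfl⟩)

theorem socle_smul_top_le_ker_lcomp {P : Type*} [AddCommGroup P] [Module R P] (f : M →ₗ[R] N)
    (hf : LinearMap.range f ≤ maximalIdeal R • ⊤) :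
    socle R • ⊤ ≤ LinearMap.ker (LinearMap.lcomp R P f) :=
  Submodule.smul_le.2 fun σ hσ g _ => LinearMap.ext fun x => by
    have : f (σ • x) = 0 := socle_smul_top_le_ker f hf (Submodule.smul_mem_smul hσ trivial)
    change (σ • g) (f x) = 0
    rw [LinearMap.smul_apply, ← map_smul, ← map_smul, this, map_zero]

theorem eq_zero_of_injective_of_range_le {n : ℕ} (hsoc : socle R ≠ ⊥)
    (f : (Fin n → R) →ₗ[R] N) (hf : Function.Injective f)
    (hrange : LinearMap.range f ≤ maximalIdeal R • ⊤) : n = 0 := by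
  obtain ⟨σ, hσ, hσ0⟩ := (Submodule.ne_bot_iff _).1 hsoc
  by_contra hn
  let i : Fin n := ⟨0, by omega⟩
  have h := socle_smul_top_le_ker f hrange
    (Submodule.smul_mem_smul hσ (Submodule.mem_top (x := Pi.single i 1)))
  rw [LinearMap.ker_eq_bot.2 hf, Submodule.mem_bot] at h
  exact hσ0 (by simpa using congrFun h i)

theorem add_mul_length_socle_le {ι₀ ι₁ ι₂ : Type*} [Finite ι₀] [Finite ι₁]
    (d₀ : (ι₁ → R) →ₗ[R] (ι₀ → R)) (d₁ : (ι₂ → R) →ₗ[R] (ι₁ → R))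
    (h₀ : LinearMap.range d₀ ≤ maximalIdeal R • ⊤) (h₁ : LinearMap.range d₁ ≤ maximalIdeal R • ⊤)
    (hexact : LinearMap.ker (LinearMap.lcomp R R d₁) ≤ LinearMap.range (LinearMap.lcomp R R d₀)) :
    (ENat.card ι₀ + ENat.card ι₁) * Module.length R (socle R) ≤
      ENat.card ι₀ * Module.length R R := by
  have := Module.length_add_length_le_of_le_ker_of_le_range (LinearMap.lcomp R R d₀)
    (socle_smul_top_le_ker_lcomp d₀ h₀) ((socle_smul_top_le_ker_lcomp d₁ h₁).trans hexact)
  rwa [Ideal.length_smul_top_dual, Ideal.length_smul_top_dual, Module.length_dual_pi,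
    ← add_mul] at this

end Socle

section MinimalFreeResolution

variable {R : Type u} [CommRing R] {M : Type v} [AddCommGroup M] [Module R M]

theorem exists_fin_mu_span_eq_top [Module.Finite R M] :
    ∃ s : Fin (mu R M) → M, Submodule.span R (Set.range s) = ⊤ := by
  obtain ⟨n, s, hs⟩ := Module.Finite.exists_fin (R := R) (M := M)
  exact Nat.sInf_mem (s := {n | ∃ s : Fin n → M, Submodule.span R (Set.range s) = ⊤}) ⟨n, s, hs⟩

theorem mu_le_of_span_eq_top {n : ℕ} {s : Fin n → M} (hs : Submodule.span R (Set.range s) = ⊤) :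
    mu R M ≤ n :=
  Nat.sInf_le ⟨s, hs⟩

theorem mu_lt_of_isUnit_coeff {n : ℕ} {s : Fin n → M} (hs : Submodule.span R (Set.range s) = ⊤)
    {c : Fin n → R} (hc : ∑ i, c i • s i = 0) {i₀ : Fin n} (hunit : IsUnit (c i₀)) :
    mu R M < n := by
  rcases n with _ | n
  · exact i₀.elim0
  refine (mu_le_of_span_eq_top (s := s ∘ i₀.succAbove) ?_).trans_lt n.lt_succ_self
  rw [eq_top_iff, ← hs, Submodule.span_le]
  rintro _ ⟨i, rfl⟩
  rcases eq_or_ne i i₀ with rfl | hi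
  · rw [Fin.sum_univ_succAbove _ i, add_eq_zero_iff_eq_neg] at hc
    refine (Submodule.smul_mem_iff_of_isUnit _ hunit).1 ?_
    rw [hc]
    exact neg_mem (Submodule.sum_mem _ fun j _ =>
      Submodule.smul_mem _ _ (Submodule.subset_span ⟨j, rfl⟩))
  · obtain ⟨j, rfl⟩ := Fin.exists_succAbove_eq hi
    exact Submodule.subset_span ⟨j, rfl⟩

variable [IsLocalRing R]

theorem exists_surjective_ker_le_maximalIdeal_smul [Module.Finite R M] :
    ∃ f : (Fin (mu R M) → R) →ₗ[R] M,
      Function.Surjective f ∧ LinearMap.ker f ≤ maximalIdeal R • ⊤ := by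
  obtain ⟨s, hs⟩ := exists_fin_mu_span_eq_top (R := R) (M := M)
  refine ⟨Fintype.linearCombination R s, ?_, fun c hc => ?_⟩
  · rw [← LinearMap.range_eq_top, Fintype.range_linearCombination, hs]
  rw [Ideal.smul_top_eq_pi]
  intro i₀ _
  by_contra hmem
  rw [LinearMap.mem_ker, Fintype.linearCombination_apply] at hc
  exact (mu_lt_of_isUnit_coeff hs hc (notMem_maximalIdeal.1 hmem)).false

variable (R) in
noncomputable def minimalCover (M : Type v) [AddCommGroup M] [Module R M] [Module.Finite R M] :
    (Fin (mu R M) → R) →ₗ[R] M :=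
  exists_surjective_ker_le_maximalIdeal_smul.choose

theorem minimalCover_surjective [Module.Finite R M] : Function.Surjective (minimalCover R M) :=
  exists_surjective_ker_le_maximalIdeal_smul.choose_spec.1

theorem ker_minimalCover_le [Module.Finite R M] :
    LinearMap.ker (minimalCover R M) ≤ maximalIdeal R • ⊤ :=
  exists_surjective_ker_le_maximalIdeal_smul.choose_spec.2

variable [IsNoetherianRing R]

variable (R M) in
/-- Stage `i` is the `i`-th Betti number `n` of `M` together with the `i`-th syzygy of `M`,
a submodule of `Fin n → R`. -/
noncomputable def minimalSyzygy [Module.Finite R M] : ℕ → Σ n : ℕ, Submodule R (Fin n → R)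
  | 0 => ⟨mu R M, LinearMap.ker (minimalCover R M)⟩
  | i + 1 => ⟨mu R (minimalSyzygy i).2, LinearMap.ker (minimalCover R (minimalSyzygy i).2)⟩

variable [Module.Finite R M]

variable (R M) in
noncomputable def minimalDiff (i : ℕ) :
    (Fin (minimalSyzygy R M (i + 1)).1 → R) →ₗ[R] (Fin (minimalSyzygy R M i).1 → R) :=
  (minimalSyzygy R M i).2.subtype ∘ₗ minimalCover R (minimalSyzygy R M i).2

theorem range_minimalDiff (i : ℕ) :
    LinearMap.range (minimalDiff R M i) = (minimalSyzygy R M i).2 := by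
  change LinearMap.range ((minimalSyzygy R M i).2.subtype ∘ₗ minimalCover R _) = _
  rw [LinearMap.range_comp, LinearMap.range_eq_top.2 minimalCover_surjective,
    Submodule.map_top, Submodule.range_subtype]

theorem ker_minimalDiff (i : ℕ) :
    LinearMap.ker (minimalDiff R M i) = (minimalSyzygy R M (i + 1)).2 := by
  change LinearMap.ker ((minimalSyzygy R M i).2.subtype ∘ₗ minimalCover R _) = _
  rw [LinearMap.ker_comp, Submodule.ker_subtype, Submodule.comap_bot]
  rfl

theorem minimalSyzygy_le (i : ℕ) : (minimalSyzygy R M i).2 ≤ maximalIdeal R • ⊤ := by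
  cases i <;> exact ker_minimalCover_le

variable (R M) in
theorem exists_isMinFreeRes :
    ∃ (b : ℕ → ℕ) (d : ∀ i, (Fin (b (i + 1)) → R) →ₗ[R] (Fin (b i) → R))
      (ε : (Fin (b 0) → R) →ₗ[R] M), IsMinFreeRes R M b d ε ∧ b 0 = mu R M := by
  refine ⟨fun i => (minimalSyzygy R M i).1, minimalDiff R M, minimalCover R M,
    ⟨minimalCover_surjective, ?_, fun i => ?_, fun i => ?_⟩, rfl⟩
  · exact LinearMap.exact_iff.2 (range_minimalDiff 0).symm
  · rw [LinearMap.exact_iff, ker_minimalDiff, range_minimalDiff]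
  · rw [range_minimalDiff]
    exact minimalSyzygy_le i

end MinimalFreeResolution

section Resolution

variable {R : Type u} [CommRing R] [IsLocalRing R] {M : Type v} [AddCommGroup M] [Module R M]
  {b : ℕ → ℕ} {d : ∀ i, (Fin (b (i + 1)) → R) →ₗ[R] (Fin (b i) → R)} {ε : (Fin (b 0) → R) →ₗ[R] M}

theorem IsMinFreeRes.betti_succ_eq_zero (hres : IsMinFreeRes R M b d ε) (hsoc : socle R ≠ ⊥)
    {k : ℕ} (h : b (k + 2) = 0) : b (k + 1) = 0 := by
  refine eq_zero_of_injective_of_range_le hsoc (d k) ?_ (hres.2.2.2 k)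
  rw [← LinearMap.ker_eq_bot, (hres.2.2.1 k).linearMap_ker_eq]
  exact (d (k + 1)).range_eq_bot_of_fin_zero h

theorem IsMinFreeRes.betti_one_eq_zero (hres : IsMinFreeRes R M b d ε) (hsoc : socle R ≠ ⊥)
    {t : ℕ} (ht : b (t + 1) = 0) : b 1 = 0 := by
  induction t with
  | zero => exact ht
  | succ t ih => exact ih (hres.betti_succ_eq_zero hsoc ht)

theorem IsMinFreeRes.betti_zero_ne_zero [Nontrivial M] (hres : IsMinFreeRes R M b d ε) :
    b 0 ≠ 0 := fun h => by
  have := hres.1.nontrivial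
  rw [h] at this
  exact not_nontrivial _ this

theorem IsMinFreeRes.bijective_of_betti_one_eq_zero (hres : IsMinFreeRes R M b d ε)
    (h : b 1 = 0) : Function.Bijective ε := by
  refine ⟨?_, hres.1⟩
  rw [← LinearMap.ker_eq_bot, hres.2.1.linearMap_ker_eq]
  exact (d 0).range_eq_bot_of_fin_zero h

end Resolution

section ExtVanishing

variable {R : Type u} [CommRing R] [IsLocalRing R] {M : Type u} [AddCommGroup M] [Module R M]
  {b : ℕ → ℕ} {d : ∀ i, (Fin (b (i + 1)) → R) →ₗ[R] (Fin (b i) → R)} {ε : (Fin (b 0) → R) →ₗ[R] M}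
  {i : ℕ}

theorem ExtVanishesSucc.ker_lcomp_le_range_lcomp {N : Type u} [AddCommGroup N] [Module R N]
    (hext : ExtVanishesSucc R M N i) (hres : IsMinFreeRes R M b d ε) :
    LinearMap.ker (LinearMap.lcomp R N (d (i + 1))) ≤ LinearMap.range (LinearMap.lcomp R N (d i)) :=
  fun g hg => let ⟨h, hgh⟩ := hext b d ε hres g hg; ⟨h, hgh.symm⟩

theorem IsMinFreeRes.betti_succ_lt_or_eq_zero (hres : IsMinFreeRes R M b d ε)
    (hsocle : Module.length R R < 2 * Module.length R (socle R)) (hext : ExtVanishesSucc R M R i) :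
    b (i + 1) < b i ∨ b (i + 1) = 0 := by
  refine lt_or_eq_zero_of_add_mul_le
    (Module.length_le_of_injective _ (Submodule.subtype_injective _)) hsocle ?_
  simpa using add_mul_length_socle_le (d i) (d (i + 1)) (hres.2.2.2 i) (hres.2.2.2 (i + 1))
    (hext.ker_lcomp_le_range_lcomp hres)

end ExtVanishing

section EndomorphismRing

variable {R : Type u} [CommRing R] {M : Type v} [AddCommGroup M] [Module R M]

theorem nontrivial_of_injective_algebraMap_end [Nontrivial R]
    (h : Function.Injective (algebraMap R (Module.End R M))) : Nontrivial M := by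
  by_contra hM
  rw [not_nontrivial_iff_subsingleton] at hM
  exact zero_ne_one (h (Subsingleton.elim _ _))

theorem eq_one_of_bijective_algebraMap_end [Nontrivial R] {n : ℕ} (e : (Fin n → R) ≃ₗ[R] M)
    (h : Function.Bijective (algebraMap R (Module.End R M))) : n = 1 := by
  have := nontrivial_of_injective_algebraMap_end h.1
  rcases n with _ | _ | n
  · exact absurd e.symm.toEquiv.subsingleton (not_subsingleton M)
  · rfl
  · obtain ⟨r, hr⟩ := h.2 (e.conj (LinearMap.single R (fun _ => R) 0 ∘ₗ LinearMap.proj 1))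
    have h₁ := LinearMap.congr_fun hr (e (Pi.single 1 1))
    simp only [Module.algebraMap_end_apply, LinearEquiv.conj_apply_apply,
      LinearEquiv.symm_apply_apply, LinearMap.coe_comp, Function.comp_apply,
      LinearMap.proj_apply] at h₁
    rw [← map_smul, e.injective.eq_iff] at h₁
    simpa using congr_fun h₁ 0

end EndomorphismRing

theorem HasFiniteInjDim.of_linearEquiv {R : Type u} [CommRing R] {M N : Type v} [AddCommGroup M]
    [Module R M] [AddCommGroup N] [Module R N] (e : M ≃ₗ[R] N) (h : HasFiniteInjDim R N) :
    HasFiniteInjDim R M := by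
  obtain ⟨n, I, dI, εI, hinj, hI, hexact, hexacts, hbound⟩ := h
  refine ⟨n, I, dI, εI ∘ₗ e.toLinearMap, hinj.comp e.injective, hI, ?_, hexacts, hbound⟩
  rw [LinearMap.exact_iff, LinearMap.range_comp, LinearEquiv.range, Submodule.map_top]
  exact hexact.linearMap_ker_eq

theorem gorenstein_of_large_socle_and_ext_vanishing_general
    (R : Type u) [CommRing R] [IsLocalRing R] [IsNoetherianRing R]
    (ω : Type u) [AddCommGroup ω] [Module R ω] [Module.Finite R ω]
    (hω : IsCanonicalModule R ω)
    (hsocle : mlength R R <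
      2 * mlength R (↥(Submodule.colon (⊥ : Submodule R R) (maximalIdeal R))))
    (hext : ∀ j, 1 ≤ j → j ≤ mu R ω → ExtVanishesSucc R ω R (j-1)) :
    IsGorensteinLocalRing R := by
  obtain ⟨-, hinj, hend⟩ := hω
  obtain ⟨b, d, ε, hres, hb₀⟩ := exists_isMinFreeRes R ω
  replace hsocle : Module.length R R < 2 * Module.length R (socle R) := by
    rwa [mlength_eq_length, mlength_eq_length] at hsocle
  have hsoc : socle R ≠ ⊥ := Submodule.nontrivial_iff_ne_bot.1 <| Module.length_pos_iff.1 <|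
    pos_of_ne_zero fun h => by rw [h, mul_zero] at hsocle; exact not_lt_zero hsocle
  have hdecr (i) (hi : i < b 0) : b (i + 1) < b i ∨ b (i + 1) = 0 :=
    hres.betti_succ_lt_or_eq_zero hsocle (by simpa using hext (i + 1) (by omega) (by omega))
  have : Nontrivial ω := nontrivial_of_injective_algebraMap_end hend.1
  obtain ⟨t, ht⟩ := Nat.exists_eq_succ_of_ne_zero hres.betti_zero_ne_zero
  have hbt : b (b 0) = 0 := eq_zero_of_forall_succ_lt_or_eq_zero le_rfl hdecr
  rw [ht] at hbt
  let e := LinearEquiv.ofBijective ε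
    (hres.bijective_of_betti_one_eq_zero (hres.betti_one_eq_zero hsoc hbt))
  have : Unique (Fin (b 0)) := by
    rw [eq_one_of_bijective_algebraMap_end e hend]
    infer_instance
  exact ⟨inferInstance, hinj.of_linearEquiv ((LinearEquiv.funUnique (Fin (b 0)) R R).symm.trans e)⟩

/-- Tachikawa-type criterion: if `R` is an Artinian local ring with canonical module
`ω` (the injective hull of the residue field) such that `2·dim_k socle(R) > ℓ(R)`
and `Ext^i_R(ω, R) = 0` for `1 ≤ i ≤ μ(ω)`, then `R` is Gorenstein. -/
theorem gorenstein_of_large_socle_and_ext_vanishing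
    (R : Type u) [CommRing R] [IsLocalRing R] [IsArtinianRing R] [IsNoetherianRing R]
    (ω : Type u) [AddCommGroup ω] [Module R ω] [Module.Finite R ω]
    (hω : IsCanonicalModule R ω)
    (hsocle : mlength R R <
      2 * mlength R (↥(Submodule.colon (⊥ : Submodule R R) (maximalIdeal R))))
    (hext : ∀ j, 1 ≤ j → j ≤ mu R ω → ExtVanishesSucc R ω R (j-1)) :
    IsGorensteinLocalRing R :=
  gorenstein_of_large_socle_and_ext_vanishing_general R ω hω hsocle hext
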